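/- arXiv:0712.4266 — 6 statements merged into one kernel-verified Lean document; each statement's English description precedes it below -/
import Mathlib

section
/- Let 0 < δ ≤ g₀ and let g : (0,∞) → (0,∞) be differentiable with δ ≤ t g'(t)/g(t) ≤ g₀ for all t > 0, and let G(t) = ∫₀^t g(τ) dτ. Then G is convex on [0,∞) and for every t ≥ 0 one has t·g(t)/(1+g₀) ≤ G(t) ≤ t·g(t) (where g(0) is interpreted as the limit 0 of g at 0). -/
/-!
Since `t g'(t) / g(t) ≥ δ > 0`, `g` is nondecreasing; hence `G`, whose derivative is `g`, is
convex, and `G(t) ≤ t g(t)`. For the lower bound, `H(s) = (1 + g₀) G(s) - s g(s)` has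
`H' = g₀ g - s g' ≥ 0` by the upper Lieberman bound, and `H(s) → 0` as `s → 0⁺` because `g` is
bounded near `0`; hence `H ≥ 0`.
-/

open Set Filter Topology MeasureTheory intervalIntegral

section Primitive

variable {f f' : ℝ → ℝ} {a b c t x : ℝ}

theorem MonotoneOn.continuousOn_primitive_Ici (hf : MonotoneOn f (Ici a)) :
    ContinuousOn (fun t => ∫ τ in a..t, f τ) (Ici a) := by
  intro x hx
  have hax : a ≤ x + 1 := by linarith [mem_Ici.mp hx]
  have hint : IntervalIntegrable f volume (min a a) (max a (x + 1)) := by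
    rw [min_self, max_eq_right hax]
    exact (hf.mono ((uIcc_of_le hax).trans_subset Icc_subset_Ici_self)).intervalIntegrable
  refine (continuousWithinAt_primitive (measure_singleton x) hint).mono_of_mem_nhdsWithin ?_
  rw [← Ici_inter_Iic]
  exact inter_mem self_mem_nhdsWithin (mem_nhdsWithin_of_mem_nhds (Iic_mem_nhds (by linarith)))

theorem MonotoneOn.hasDerivAt_primitive (hf : MonotoneOn f (Ici a))
    (hcont : ContinuousOn f (Ioi a)) (hx : a < x) :
    HasDerivAt (fun t => ∫ τ in a..t, f τ) (f x) x :=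
  integral_hasDerivAt_right
    ((hf.mono ((uIcc_of_le hx.le).trans_subset Icc_subset_Ici_self)).intervalIntegrable)
    (hcont.stronglyMeasurableAtFilter isOpen_Ioi x hx)
    (hcont.continuousAt (Ioi_mem_nhds hx))

theorem MonotoneOn.convexOn_primitive (hf : MonotoneOn f (Ici a))
    (hcont : ContinuousOn f (Ioi a)) :
    ConvexOn ℝ (Ici a) (fun t => ∫ τ in a..t, f τ) := by
  refine MonotoneOn.convexOn_of_deriv (convex_Ici a) hf.continuousOn_primitive_Ici ?_ ?_
  · rw [interior_Ici]
    exact fun x hx => (hf.hasDerivAt_primitive hcont hx).differentiableAt.differentiableWithinAt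
  · rw [interior_Ici]
    intro x hx y hy hxy
    rw [(hf.hasDerivAt_primitive hcont hx).deriv, (hf.hasDerivAt_primitive hcont hy).deriv]
    exact hf (mem_Ici_of_Ioi hx) (mem_Ici_of_Ioi hy) hxy

theorem MonotoneOn.intervalIntegral_le_mul (hab : a ≤ b) (hf : MonotoneOn f (Icc a b)) :
    ∫ x in a..b, f x ≤ (b - a) * f b := by
  calc ∫ x in a..b, f x ≤ ∫ _ in a..b, f b :=
        integral_mono_on hab (MonotoneOn.intervalIntegrable (by rwa [uIcc_of_le hab]))
          intervalIntegrable_const fun x hx => hf hx (right_mem_Icc.mpr hab) hx.2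
    _ = (b - a) * f b := by rw [intervalIntegral.integral_const, smul_eq_mul]

theorem MonotoneOn.tendsto_mul_nhdsGE_zero (hf : MonotoneOn f (Ici 0)) :
    Tendsto (fun s => s * f s) (𝓝[≥] 0) (𝓝 0) := by
  have hlim : ∀ y, Tendsto (fun s : ℝ => s * y) (𝓝[≥] 0) (𝓝 0) := fun y =>
    ((continuous_mul_const y).tendsto' 0 0 (zero_mul y)).mono_left nhdsWithin_le_nhds
  have hnear : Icc (0 : ℝ) 1 ∈ 𝓝[≥] 0 := Icc_mem_nhdsGE one_pos
  refine tendsto_of_tendsto_of_tendsto_of_le_of_le' (hlim (f 0)) (hlim (f 1)) ?_ ?_ <;>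
    filter_upwards [hnear] with s hs
  · exact mul_le_mul_of_nonneg_left (hf self_mem_Ici hs.1 hs.1) hs.1
  · exact mul_le_mul_of_nonneg_left (hf hs.1 (mem_Ici.mpr zero_le_one) hs.2) hs.1

theorem monotoneOn_Ici_of_hasDerivAt_nonneg (hderiv : ∀ x > a, HasDerivAt f (f' x) x)
    (hf' : ∀ x > a, 0 ≤ f' x) (ha : ∀ x > a, f a ≤ f x) : MonotoneOn f (Ici a) := by
  rw [← Ioi_insert, monotoneOn_insert_iff]
  refine ⟨fun x hx hxa => absurd hxa (not_le.mpr hx), fun x hx _ => ha x hx, ?_⟩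
  refine monotoneOn_of_hasDerivWithinAt_nonneg (f' := f') (convex_Ioi a)
    (fun x hx => (hderiv x hx).continuousAt.continuousWithinAt) ?_ ?_ <;> rw [interior_Ioi]
  · exact fun x hx => (hderiv x hx).hasDerivWithinAt
  · exact hf'

theorem MonotoneOn.mul_le_intervalIntegral_of_mul_deriv_le (hf : MonotoneOn f (Ici 0))
    (hderiv : ∀ s > 0, HasDerivAt f (f' s) s) (hc : ∀ s > 0, s * f' s ≤ c * f s) (ht : 0 ≤ t) :
    t * f t ≤ (1 + c) * ∫ s in 0..t, f s := by
  have hcont : ContinuousOn f (Ioi 0) := fun x hx => (hderiv x hx).continuousAt.continuousWithinAt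
  set H : ℝ → ℝ := fun s => (1 + c) * (∫ τ in 0..s, f τ) - s * f s with hH
  have hH' : ∀ s > 0, HasDerivAt H (c * f s - s * f' s) s := fun s hs =>
    (((hf.hasDerivAt_primitive hcont hs).const_mul (1 + c)).sub
      ((hasDerivAt_id s).mul (hderiv s hs))).congr_deriv (by simp only [id]; ring)
  have hHcont : ContinuousOn H (Ici 0) := by
    refine (hf.continuousOn_primitive_Ici.const_smul (1 + c)).sub fun s hs => ?_
    rcases (mem_Ici.mp hs).eq_or_lt with rfl | hs
    · rw [ContinuousWithinAt, zero_mul]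
      exact hf.tendsto_mul_nhdsGE_zero
    · exact (continuousAt_id.mul (hderiv s hs).continuousAt).continuousWithinAt
  have hHmono : MonotoneOn H (Ici 0) := by
    refine monotoneOn_of_hasDerivWithinAt_nonneg (f' := fun s => c * f s - s * f' s)
      (convex_Ici 0) hHcont ?_ ?_ <;> rw [interior_Ici]
    · exact fun s hs => (hH' s hs).hasDerivWithinAt
    · exact fun s hs => sub_nonneg.mpr (hc s hs)
  simpa only [hH, integral_same, mul_zero, zero_mul, sub_zero, sub_nonneg] using
    hHmono self_mem_Ici ht ht

end Primitive

/-- Under the Lieberman condition, `G(t) = ∫₀^t g` is convex on `[0,∞)` and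
`t g(t)/(1+g₀) ≤ G(t) ≤ t g(t)` for all `t ≥ 0` (with `g(0) = 0`, the limit of `g` at `0`). -/
theorem G_convex_and_bounds
    (δ g₀ : ℝ) (hδ : 0 < δ) (hδg₀ : δ ≤ g₀)
    (g g' : ℝ → ℝ)
    (hg0 : g 0 = 0)
    (hpos : ∀ t > 0, 0 < g t)
    (hderiv : ∀ t > 0, HasDerivAt g (g' t) t)
    (hlieb : ∀ t > 0, δ ≤ t * g' t / g t ∧ t * g' t / g t ≤ g₀)
    (G : ℝ → ℝ) (hG : ∀ t, G t = ∫ τ in (0:ℝ)..t, g τ) :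
    ConvexOn ℝ (Set.Ici 0) G ∧
    ∀ t ≥ (0:ℝ), t * g t / (1 + g₀) ≤ G t ∧ G t ≤ t * g t := by
  have hg'_nonneg : ∀ t > 0, 0 ≤ g' t := fun t ht => by
    have h := hδ.trans_le (hlieb t ht).1
    rw [div_pos_iff_of_pos_right (hpos t ht)] at h
    exact (pos_of_mul_pos_right h ht.le).le
  have hmono : MonotoneOn g (Ici 0) :=
    monotoneOn_Ici_of_hasDerivAt_nonneg hderiv hg'_nonneg fun t ht => hg0.symm ▸ (hpos t ht).le
  have hcont : ContinuousOn g (Ioi 0) := fun t ht => (hderiv t ht).continuousAt.continuousWithinAt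
  rw [funext hG]
  refine ⟨hmono.convexOn_primitive hcont, fun t ht => ⟨?_, ?_⟩⟩
  · rw [div_le_iff₀ (by linarith), mul_comm _ (1 + g₀)]
    exact hmono.mul_le_intervalIntegral_of_mul_deriv_le hderiv
      (fun s hs => (div_le_iff₀ (hpos s hs)).mp (hlieb s hs).2) ht
  · simpa using (hmono.mono Icc_subset_Ici_self).intervalIntegral_le_mul ht
end

section
/- Let a, b > 0 and c ≥ 1, and define g(t) = t^a · log(b t + c) for t > 0. Then g maps (0,∞) into (0,∞), is differentiable, and satisfies a ≤ t g'(t)/g(t) ≤ a + 1 for all t > 0; i.e., g satisfies the Lieberman condition with constants δ = a and g₀ = a + 1. -/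
/-!
The quantity `t g'(t) / g(t)` is `t` times the logarithmic derivative of `g`, which is additive
over products. The factor `t ^ a` contributes exactly `a`; the factor `log (b t + c)` contributes
`b t / ((b t + c) log (b t + c))`, which lies in `[0, 1]` because
`b t ≤ (b t + c) - 1 ≤ (b t + c) log (b t + c)`.
-/

open Real

lemma logDeriv_rpow_const {a x : ℝ} (hx : 0 < x) : logDeriv (· ^ a) x = a / x := by
  rw [logDeriv_apply, (hasDerivAt_rpow_const (Or.inl hx.ne')).deriv, rpow_sub_one hx.ne']
  field_simp

lemma logDeriv_log_affine {b c t : ℝ} (h : b * t + c ≠ 0) :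
    logDeriv (fun x ↦ log (b * x + c)) t = b / ((b * t + c) * log (b * t + c)) := by
  have hderiv : HasDerivAt (fun x ↦ log (b * x + c)) (b / (b * t + c)) t := by
    simpa using (((hasDerivAt_id t).const_mul b).add_const c).log h
  rw [logDeriv_apply, hderiv.deriv, div_div]

lemma le_add_mul_log_add {s c : ℝ} (hs : 0 ≤ s) (hc : 1 ≤ c) : s ≤ (s + c) * log (s + c) :=
  calc s ≤ s + c - 1 := by linarith
    _ ≤ (s + c) * log (s + c) := self_sub_one_le_mul_log (by linarith)

theorem power_log_satisfies_lieberman_general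
    (a b c : ℝ) (hb : 0 < b) (hc : 1 ≤ c) :
    ∀ t > (0:ℝ),
      0 < t ^ a * Real.log (b * t + c) ∧
      DifferentiableAt ℝ (fun t : ℝ => t ^ a * Real.log (b * t + c)) t ∧
      a ≤ t * deriv (fun t : ℝ => t ^ a * Real.log (b * t + c)) t /
            (t ^ a * Real.log (b * t + c)) ∧
      t * deriv (fun t : ℝ => t ^ a * Real.log (b * t + c)) t /
            (t ^ a * Real.log (b * t + c)) ≤ a + 1 := by
  intro t ht
  have hbt : 0 < b * t := mul_pos hb ht
  have hx : 0 < b * t + c := by linarith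
  have hlog : 0 < log (b * t + c) := log_pos (by linarith)
  have hdiff_pow : DifferentiableAt ℝ (· ^ a) t := differentiableAt_rpow_const_of_ne a ht.ne'
  have hdiff_log : DifferentiableAt ℝ (fun x ↦ log (b * x + c)) t := by
    fun_prop (disch := positivity)
  have elasticity : t * deriv (fun t ↦ t ^ a * log (b * t + c)) t / (t ^ a * log (b * t + c)) =
      a + b * t / ((b * t + c) * log (b * t + c)) := by
    rw [mul_div_assoc, ← logDeriv_apply,
      logDeriv_mul t (by positivity) hlog.ne' hdiff_pow hdiff_log,
      logDeriv_rpow_const ht, logDeriv_log_affine hx.ne']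
    field_simp
  refine ⟨by positivity, hdiff_pow.mul hdiff_log, ?_, ?_⟩ <;> rw [elasticity]
  · have : 0 ≤ b * t / ((b * t + c) * log (b * t + c)) := by positivity
    linarith
  · have : b * t / ((b * t + c) * log (b * t + c)) ≤ 1 :=
      (div_le_one (by positivity)).mpr (le_add_mul_log_add hbt.le hc)
    linarith

/-- For `a, b > 0`, `c ≥ 1`, the function `g(t) = t^a log(b t + c)` maps
`(0,∞)` into `(0,∞)`, is differentiable, and satisfies the Lieberman condition
`a ≤ t g'(t)/g(t) ≤ a + 1` for all `t > 0`. -/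
theorem power_log_satisfies_lieberman
    (a b c : ℝ) (ha : 0 < a) (hb : 0 < b) (hc : 1 ≤ c) :
    ∀ t > (0:ℝ),
      0 < t ^ a * Real.log (b * t + c) ∧
      DifferentiableAt ℝ (fun t : ℝ => t ^ a * Real.log (b * t + c)) t ∧
      a ≤ t * deriv (fun t : ℝ => t ^ a * Real.log (b * t + c)) t /
            (t ^ a * Real.log (b * t + c)) ∧
      t * deriv (fun t : ℝ => t ^ a * Real.log (b * t + c)) t /
            (t ^ a * Real.log (b * t + c)) ≤ a + 1 :=
  power_log_satisfies_lieberman_general a b c hb hc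
end

section
/- Let a₁, a₂, c₁, s > 0 and set c₂ = (a₁ c₁ / a₂) · s^{a₁ − a₂} and d = c₁ s^{a₁} − c₂ s^{a₂}. Define g(t) = c₁ t^{a₁} for 0 < t ≤ s and g(t) = c₂ t^{a₂} + d for t > s. Then g maps (0,∞) into (0,∞), is continuously differentiable on (0,∞), and satisfies min(a₁,a₂) ≤ t g'(t)/g(t) ≤ max(a₁,a₂) for all t > 0; i.e., g satisfies the Lieberman condition with constants δ = min(a₁,a₂) and g₀ = max(a₁,a₂). -/
/-! Below `s` the function is a pure power, so `t g'/g = a₁` there. Above `s`, writing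
`x = c₂ t^{a₂}`, one has `t g'/g = a₂ x / (x + d)`, a monotone function of `x` which equals
`a₁` at `x = c₂ s^{a₂}` (this is the choice of `c₂`) and tends to `a₂`; hence it stays
between `a₁` and `a₂`. The constants make the two pieces agree to first order at `s`, so they
glue to a `C¹` function. -/

open Real Set

section Gluing

variable {f₁ f₂ f₁' f₂' : ℝ → ℝ} {s t : ℝ} {U : Set ℝ}

theorem HasDerivAt.ite_le_of_eq {f' : ℝ} (h₁ : HasDerivAt f₁ f' s) (h₂ : HasDerivAt f₂ f' s)
    (hval : f₁ s = f₂ s) : HasDerivAt (fun u => if u ≤ s then f₁ u else f₂ u) f' s := by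
  have hle : HasDerivWithinAt (fun u => if u ≤ s then f₁ u else f₂ u) f' (Iic s) s :=
    h₁.hasDerivWithinAt.congr (fun u hu => if_pos hu) (if_pos le_rfl)
  have hge : HasDerivWithinAt (fun u => if u ≤ s then f₁ u else f₂ u) f' (Ici s) s := by
    refine h₂.hasDerivWithinAt.congr (fun u hu => ?_) (by simp [hval])
    rcases (mem_Ici.1 hu).eq_or_lt with rfl | hsu
    · simp [hval]
    · exact if_neg hsu.not_ge
  simpa only [Iic_union_Ici, hasDerivWithinAt_univ] using hle.union hge

theorem hasDerivAt_ite_le (h₁ : ∀ u ∈ U, HasDerivAt f₁ (f₁' u) u)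
    (h₂ : ∀ u ∈ U, HasDerivAt f₂ (f₂' u) u) (hval : f₁ s = f₂ s) (hder : f₁' s = f₂' s)
    (ht : t ∈ U) :
    HasDerivAt (fun u => if u ≤ s then f₁ u else f₂ u) (if t ≤ s then f₁' t else f₂' t) t := by
  rcases lt_trichotomy t s with hts | rfl | hst
  · rw [if_pos hts.le]
    exact (h₁ t ht).congr_of_eventuallyEq
      ((eventually_lt_nhds hts).mono fun u hu => if_pos hu.le)
  · rw [if_pos le_rfl]
    exact (h₁ t ht).ite_le_of_eq (hder ▸ h₂ t ht) hval
  · rw [if_neg hst.not_ge]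
    exact (h₂ t ht).congr_of_eventuallyEq
      ((eventually_gt_nhds hst).mono fun u hu => if_neg hu.not_ge)

theorem contDiffOn_one_ite_le (hU : IsOpen U)
    (h₁ : ∀ u ∈ U, HasDerivAt f₁ (f₁' u) u) (h₂ : ∀ u ∈ U, HasDerivAt f₂ (f₂' u) u)
    (hc₁ : ContinuousOn f₁' U) (hc₂ : ContinuousOn f₂' U)
    (hval : f₁ s = f₂ s) (hder : f₁' s = f₂' s) :
    ContDiffOn ℝ 1 (fun u => if u ≤ s then f₁ u else f₂ u) U := by
  have hderiv := fun t ht => hasDerivAt_ite_le (t := t) h₁ h₂ hval hder ht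
  rw [contDiffOn_one_iff_derivWithin hU.uniqueDiffOn]
  refine ⟨fun t ht => (hderiv t ht).differentiableAt.differentiableWithinAt, ?_⟩
  refine ContinuousOn.congr ?_ fun t ht => (derivWithin_of_isOpen hU ht).trans (hderiv t ht).deriv
  refine ContinuousOn.if (fun u hu => ?_) (hc₁.mono inter_subset_left) (hc₂.mono inter_subset_left)
  rw [frontier_Iic_subset s hu.2]
  exact hder

end Gluing

theorem mul_div_add_mem_uIcc {a b d x₀ x : ℝ} (ha : 0 < a) (hb : 0 ≤ b) (hx₀ : 0 ≤ x₀)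
    (hx : x₀ ≤ x) (hxd : 0 < x + d) (hd : a * d = (b - a) * x₀) :
    b * x / (x + d) ∈ uIcc a b := by
  have hgap : b * x - a * (x + d) = (b - a) * (x - x₀) := by linear_combination -hd
  rcases le_total a b with hab | hba
  · have hd₀ : 0 ≤ d := nonneg_of_mul_nonneg_right (hd ▸ by nlinarith) ha
    refine mem_uIcc_of_le ((le_div_iff₀ hxd).2 ?_) ((div_le_iff₀ hxd).2 ?_) <;> nlinarith
  · have hd₀ : d ≤ 0 := nonpos_of_mul_nonpos_right (hd ▸ by nlinarith) ha
    refine mem_uIcc_of_ge ((le_div_iff₀ hxd).2 ?_) ((div_le_iff₀ hxd).2 ?_) <;> nlinarith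

section PowerPieces

variable {a b c e s t : ℝ}

theorem mul_const_mul_mul_rpow_sub_one (ht : t ≠ 0) (a c : ℝ) :
    t * (c * (a * t ^ (a - 1))) = a * (c * t ^ a) := by
  rw [rpow_sub_one ht]
  field_simp

theorem continuousOn_const_mul_mul_rpow_sub_one (a c : ℝ) :
    ContinuousOn (fun t : ℝ => c * (a * t ^ (a - 1))) (Ioi 0) :=
  ((continuousOn_id.rpow_const fun _ ht => Or.inl (ne_of_gt ht)).const_smul a).const_smul c

theorem const_mul_rpow_add_pos_of_le (hb : 0 ≤ b) (hc : 0 ≤ c) (hs : 0 ≤ s) (hst : s ≤ t)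
    (hpos : 0 < c * s ^ b + e) : 0 < c * t ^ b + e := by
  have : c * s ^ b ≤ c * t ^ b := by gcongr
  linarith

theorem mul_deriv_div_const_mul_rpow_add_mem_uIcc (ha : 0 < a) (hb : 0 < b) (hc : 0 < c)
    (hs : 0 < s) (hst : s ≤ t) (hpos : 0 < c * s ^ b + e)
    (hslope : b * (c * s ^ b) = a * (c * s ^ b + e)) :
    t * (c * (b * t ^ (b - 1))) / (c * t ^ b + e) ∈ uIcc a b := by
  rw [mul_const_mul_mul_rpow_sub_one (hs.trans_le hst).ne']
  refine mul_div_add_mem_uIcc (x₀ := c * s ^ b) ha hb.le (by positivity) (by gcongr)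
    (const_mul_rpow_add_pos_of_le hb.le hc.le hs.le hst hpos) (by linarith)

end PowerPieces

/-- The piecewise function `g(t) = c₁ t^{a₁}` for `0 < t ≤ s`,
`g(t) = c₂ t^{a₂} + d` for `t > s` (with `c₂, d` chosen so that `g` is `C¹`)
maps `(0,∞)` into `(0,∞)`, is `C¹` on `(0,∞)`, and satisfies the Lieberman condition
with constants `min(a₁,a₂)` and `max(a₁,a₂)`. -/
theorem piecewise_power_satisfies_lieberman
    (a₁ a₂ c₁ s : ℝ) (ha₁ : 0 < a₁) (ha₂ : 0 < a₂) (hc₁ : 0 < c₁) (hs : 0 < s)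
    (c₂ d : ℝ)
    (hc₂ : c₂ = a₁ * c₁ / a₂ * s ^ (a₁ - a₂))
    (hd : d = c₁ * s ^ a₁ - c₂ * s ^ a₂)
    (g : ℝ → ℝ)
    (hg : ∀ t, g t = if t ≤ s then c₁ * t ^ a₁ else c₂ * t ^ a₂ + d) :
    (∀ t > (0:ℝ), 0 < g t) ∧
    ContDiffOn ℝ 1 g (Set.Ioi 0) ∧
    ∀ t > (0:ℝ), min a₁ a₂ ≤ t * deriv g t / g t ∧ t * deriv g t / g t ≤ max a₁ a₂ := by
  have hc₂pos : 0 < c₂ := by rw [hc₂]; positivity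
  have hval : c₁ * s ^ a₁ = c₂ * s ^ a₂ + d := by rw [hd]; ring
  have hupper_pos : 0 < c₂ * s ^ a₂ + d := hval ▸ by positivity
  have hslope : a₂ * (c₂ * s ^ a₂) = a₁ * (c₂ * s ^ a₂ + d) := by
    rw [← hval, hc₂, rpow_sub hs]
    field_simp
  have hder : c₁ * (a₁ * s ^ (a₁ - 1)) = c₂ * (a₂ * s ^ (a₂ - 1)) := by
    rw [rpow_sub_one hs.ne', rpow_sub_one hs.ne']
    field_simp
    linear_combination a₁ * hval - hslope
  have hpow₁ (t : ℝ) (ht : t ∈ Ioi 0) :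
      HasDerivAt (fun u => c₁ * u ^ a₁) (c₁ * (a₁ * t ^ (a₁ - 1))) t :=
    (hasDerivAt_rpow_const (Or.inl (ne_of_gt ht))).const_mul c₁
  have hpow₂ (t : ℝ) (ht : t ∈ Ioi 0) :
      HasDerivAt (fun u => c₂ * u ^ a₂ + d) (c₂ * (a₂ * t ^ (a₂ - 1))) t :=
    ((hasDerivAt_rpow_const (Or.inl (ne_of_gt ht))).const_mul c₂).add_const d
  obtain rfl : g = fun t => if t ≤ s then c₁ * t ^ a₁ else c₂ * t ^ a₂ + d := funext hg
  refine ⟨fun t ht => ?_,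
    contDiffOn_one_ite_le isOpen_Ioi hpow₁ hpow₂ (continuousOn_const_mul_mul_rpow_sub_one _ _)
    (continuousOn_const_mul_mul_rpow_sub_one _ _) hval hder, fun t ht => ?_⟩
  · dsimp only
    split_ifs with hts
    · positivity
    · exact const_mul_rpow_add_pos_of_le ha₂.le hc₂pos.le hs.le (not_le.1 hts).le hupper_pos
  · rw [← mem_Icc, (hasDerivAt_ite_le hpow₁ hpow₂ hval hder ht).deriv]
    change _ ∈ uIcc a₁ a₂
    dsimp only
    split_ifs with hts
    · rw [mul_const_mul_mul_rpow_sub_one ht.ne', mul_div_cancel_right₀ _ (by positivity)]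
      exact left_mem_uIcc
    · exact mul_deriv_div_const_mul_rpow_add_mem_uIcc ha₁ ha₂ hc₂pos hs (not_le.1 hts).le
        hupper_pos hslope
end

section
/- Let 0 < δ ≤ g₀ and let g : (0,∞) → (0,∞) be differentiable with δ ≤ t g'(t)/g(t) ≤ g₀ for all t > 0. Then for every t > 0 and every s ≥ 1 one has s² · g'(t s) ≥ (δ/g₀) · s · g'(t). -/
/-!
The lower bound `t g'(t) ≥ δ g(t) ≥ 0` makes `g` nondecreasing, so `g(t) ≤ g(ts)`
for `s ≥ 1`. Chaining the upper bound at `t` with the lower bound at `ts` through this gives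
`δ s · t g'(t) ≤ δ g₀ s g(t) ≤ g₀ s · δ g(ts) ≤ g₀ s · ts g'(ts)`, and dividing by `g₀ t` is the claim.
-/

open Set

lemma monotoneOn_Ioi_of_le_mul_deriv_div {δ : ℝ} {g g' : ℝ → ℝ} (hδ : 0 ≤ δ)
    (hpos : ∀ t > 0, 0 < g t) (hderiv : ∀ t > 0, HasDerivAt g (g' t) t)
    (hlow : ∀ t > 0, δ ≤ t * g' t / g t) : MonotoneOn g (Ioi 0) := by
  refine monotoneOn_of_hasDerivWithinAt_nonneg (convex_Ioi 0)
    (fun t ht ↦ (hderiv t ht).continuousAt.continuousWithinAt)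
    (fun t ht ↦ (hderiv t (interior_subset ht)).hasDerivWithinAt) fun t ht ↦ ?_
  rw [interior_Ioi] at ht
  have hg : 0 < g t := hpos t ht
  have h : δ * g t ≤ t * g' t := (le_div_iff₀ hg).1 (hlow t ht)
  exact nonneg_of_mul_nonneg_right ((mul_nonneg hδ hg.le).trans h) ht

theorem lieberman_derivative_scaling_general
    (δ g₀ : ℝ) (hδ : 0 < δ)
    (g g' : ℝ → ℝ)
    (hpos : ∀ t > 0, 0 < g t)
    (hderiv : ∀ t > 0, HasDerivAt g (g' t) t)
    (hlieb : ∀ t > 0, δ ≤ t * g' t / g t ∧ t * g' t / g t ≤ g₀) :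
    ∀ t > (0:ℝ), ∀ s ≥ (1:ℝ), δ / g₀ * (s * g' t) ≤ s ^ 2 * g' (t * s) := by
  intro t ht s hs
  have hs₀ : 0 ≤ s := zero_le_one.trans hs
  have hts : 0 < t * s := mul_pos ht (zero_lt_one.trans_le hs)
  have hg₀ : 0 < g₀ := hδ.trans_le ((hlieb 1 one_pos).1.trans (hlieb 1 one_pos).2)
  have hgrow : g t ≤ g (t * s) :=
    monotoneOn_Ioi_of_le_mul_deriv_div hδ.le hpos hderiv (fun t ht ↦ (hlieb t ht).1)
      ht hts (le_mul_of_one_le_right ht.le hs)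
  have hupper : t * g' t ≤ g₀ * g t := (div_le_iff₀ (hpos t ht)).1 (hlieb t ht).2
  have hlower : δ * g (t * s) ≤ t * s * g' (t * s) := (le_div_iff₀ (hpos _ hts)).1 (hlieb _ hts).1
  rw [div_mul_eq_mul_div, div_le_iff₀ hg₀]
  refine le_of_mul_le_mul_left ?_ ht
  calc t * (δ * (s * g' t)) = δ * s * (t * g' t) := by ring
    _ ≤ δ * s * (g₀ * g t) := by gcongr
    _ = g₀ * s * (δ * g t) := by ring
    _ ≤ g₀ * s * (δ * g (t * s)) := by gcongr
    _ ≤ g₀ * s * (t * s * g' (t * s)) := by gcongr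
    _ = t * (s ^ 2 * g' (t * s) * g₀) := by ring

/-- Under the Lieberman condition, for every `t > 0` and `s ≥ 1` one has
`s² g'(t s) ≥ (δ/g₀) s g'(t)`. -/
theorem lieberman_derivative_scaling
    (δ g₀ : ℝ) (hδ : 0 < δ) (hδg₀ : δ ≤ g₀)
    (g g' : ℝ → ℝ)
    (hpos : ∀ t > 0, 0 < g t)
    (hderiv : ∀ t > 0, HasDerivAt g (g' t) t)
    (hlieb : ∀ t > 0, δ ≤ t * g' t / g t ∧ t * g' t / g t ≤ g₀) :
    ∀ t > (0:ℝ), ∀ s ≥ (1:ℝ), δ / g₀ * (s * g' t) ≤ s ^ 2 * g' (t * s) :=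
  lieberman_derivative_scaling_general δ g₀ hδ g g' hpos hderiv hlieb
end

section
/- Let 0 < δ ≤ g₀ and let g : (0,∞) → (0,∞) be differentiable with δ ≤ t g'(t)/g(t) ≤ g₀ for all t > 0. Define G(t) = ∫₀^t g(τ) dτ and Φ(t) = t·g(t) − G(t). Then Φ is strictly increasing on (0,∞) and for every t > 0 one has (δ/(1+δ)) · t·g(t) ≤ Φ(t) ≤ (g₀/(1+g₀)) · t·g(t). -/
/-!
By the fundamental theorem of calculus `Φ' = t g'`, so the Lieberman condition reads
`δ G' ≤ Φ' ≤ g₀ G'` on `(0, ∞)`; in particular `Φ' > 0`. Since `g` is increasing and positive,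
`t g(t)` and `G(t)` tend to `0` as `t → 0⁺`, and integrating the comparison gives
`δ G ≤ Φ ≤ g₀ G`. Substituting `G = t g − Φ` and solving for `Φ` yields the bounds.
-/

open MeasureTheory Filter Set Topology

lemma monotoneOn_Ioi_of_hasDerivAt_nonneg {f f' : ℝ → ℝ} {a : ℝ}
    (hf : ∀ x > a, HasDerivAt f (f' x) x) (hf' : ∀ x > a, 0 ≤ f' x) :
    MonotoneOn f (Ioi a) :=
  monotoneOn_of_hasDerivWithinAt_nonneg (convex_Ioi a)
    (fun x hx => (hf x hx).continuousAt.continuousWithinAt)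
    (by rw [interior_Ioi]; exact fun x hx => (hf x hx).hasDerivWithinAt)
    (by rw [interior_Ioi]; exact hf')

lemma strictMonoOn_Ioi_of_hasDerivAt_pos {f f' : ℝ → ℝ} {a : ℝ}
    (hf : ∀ x > a, HasDerivAt f (f' x) x) (hf' : ∀ x > a, 0 < f' x) :
    StrictMonoOn f (Ioi a) :=
  strictMonoOn_of_hasDerivWithinAt_pos (convex_Ioi a)
    (fun x hx => (hf x hx).continuousAt.continuousWithinAt)
    (by rw [interior_Ioi]; exact fun x hx => (hf x hx).hasDerivWithinAt)
    (by rw [interior_Ioi]; exact hf')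

lemma le_of_hasDerivAt_le_of_tendsto_nhdsGT {f g f' g' : ℝ → ℝ} {a l x : ℝ}
    (hf : ∀ y > a, HasDerivAt f (f' y) y) (hg : ∀ y > a, HasDerivAt g (g' y) y)
    (hle : ∀ y > a, f' y ≤ g' y)
    (hfl : Tendsto f (𝓝[>] a) (𝓝 l)) (hgl : Tendsto g (𝓝[>] a) (𝓝 l)) (hx : a < x) :
    f x ≤ g x := by
  have hmono : MonotoneOn (fun y => g y - f y) (Ioi a) :=
    monotoneOn_Ioi_of_hasDerivAt_nonneg (fun y hy => (hg y hy).sub (hf y hy))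
      (fun y hy => sub_nonneg.2 (hle y hy))
  have hlim : Tendsto (fun y => g y - f y) (𝓝[>] a) (𝓝 0) := by simpa using hgl.sub hfl
  have : 0 ≤ g x - f x := le_of_tendsto hlim <| by
    filter_upwards [Ioc_mem_nhdsGT hx] with y hy using hmono hy.1 hx hy.2
  linarith

lemma intervalIntegrable_of_monotoneOn_Ioi {g : ℝ → ℝ} {a b : ℝ} (hmono : MonotoneOn g (Ioi a))
    (hnonneg : ∀ x > a, 0 ≤ g x) (hab : a ≤ b) : IntervalIntegrable g volume a b := by
  -- Redefining `g` at `a` makes it monotone on the closed interval.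
  have hmono' : MonotoneOn (Function.update g a 0) (uIcc a b) := by
    rw [uIcc_of_le hab]
    intro x hx y hy hxy
    rcases hx.1.eq_or_lt with rfl | hax
    · rcases hy.1.eq_or_lt with rfl | hay
      · rfl
      · simpa [Function.update_of_ne hay.ne'] using hnonneg y hay
    · have hay := hax.trans_le hxy
      simpa [Function.update_of_ne hax.ne', Function.update_of_ne hay.ne'] using hmono hax hay hxy
  refine hmono'.intervalIntegrable.congr fun x hx => ?_
  rw [uIoc_of_le hab] at hx
  exact Function.update_of_ne hx.1.ne' _ _

lemma tendsto_integral_nhdsGT {g : ℝ → ℝ} {a b : ℝ} (hab : a < b)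
    (hg : IntervalIntegrable g volume a b) :
    Tendsto (fun t => ∫ τ in a..t, g τ) (𝓝[>] a) (𝓝 0) := by
  have hcont := intervalIntegral.continuousOn_primitive_interval' hg left_mem_uIcc a left_mem_uIcc
  rw [uIcc_of_le hab.le] at hcont
  simpa using (hcont.mono_of_mem_nhdsWithin (Icc_mem_nhdsGT hab)).tendsto

lemma tendsto_mul_nhdsGT_zero_of_monotoneOn {g : ℝ → ℝ} (hmono : MonotoneOn g (Ioi 0))
    (hnonneg : ∀ x > 0, 0 ≤ g x) : Tendsto (fun t => t * g t) (𝓝[>] 0) (𝓝 0) := by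
  refine (tendsto_nhdsWithin_of_tendsto_nhds tendsto_id).zero_mul_isBoundedUnder_le ?_
  refine isBoundedUnder_of_eventually_le (a := g 1) ?_
  filter_upwards [Ioc_mem_nhdsGT one_pos] with t ht
  rw [Function.comp_apply, Real.norm_of_nonneg (hnonneg t ht.1)]
  exact hmono ht.1 (mem_Ioi.2 one_pos) ht.2

/-- Under the Lieberman condition, `Φ(t) = t g(t) − G(t)` is strictly
increasing on `(0,∞)` and `(δ/(1+δ)) t g(t) ≤ Φ(t) ≤ (g₀/(1+g₀)) t g(t)` for `t > 0`. -/
theorem Phi_strictMono_and_bounds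
    (δ g₀ : ℝ) (hδ : 0 < δ) (hδg₀ : δ ≤ g₀)
    (g g' : ℝ → ℝ)
    (hpos : ∀ t > 0, 0 < g t)
    (hderiv : ∀ t > 0, HasDerivAt g (g' t) t)
    (hlieb : ∀ t > 0, δ ≤ t * g' t / g t ∧ t * g' t / g t ≤ g₀)
    (G Φ : ℝ → ℝ)
    (hG : ∀ t, G t = ∫ τ in (0:ℝ)..t, g τ)
    (hΦ : ∀ t, Φ t = t * g t - G t) :
    StrictMonoOn Φ (Set.Ioi 0) ∧
    ∀ t > (0:ℝ), δ / (1 + δ) * (t * g t) ≤ Φ t ∧ Φ t ≤ g₀ / (1 + g₀) * (t * g t) := by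
  obtain rfl : G = fun t => ∫ τ in (0:ℝ)..t, g τ := funext hG
  obtain rfl : Φ = fun t => t * g t - ∫ τ in (0:ℝ)..t, g τ := funext hΦ
  have hlower t (ht : 0 < t) : δ * g t ≤ t * g' t := (le_div_iff₀ (hpos t ht)).1 (hlieb t ht).1
  have hupper t (ht : 0 < t) : t * g' t ≤ g₀ * g t := (div_le_iff₀ (hpos t ht)).1 (hlieb t ht).2
  have hΦd_pos t (ht : 0 < t) : 0 < t * g' t := (mul_pos hδ (hpos t ht)).trans_le (hlower t ht)
  have hmono : MonotoneOn g (Ioi 0) := monotoneOn_Ioi_of_hasDerivAt_nonneg hderiv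
    fun t ht => (pos_of_mul_pos_right (hΦd_pos t ht) ht.le).le
  have hint t (ht : 0 < t) : IntervalIntegrable g volume 0 t :=
    intervalIntegrable_of_monotoneOn_Ioi hmono (fun x hx => (hpos x hx).le) ht.le
  have hGd t (ht : 0 < t) : HasDerivAt (fun s => ∫ τ in (0:ℝ)..s, g τ) (g t) t :=
    intervalIntegral.integral_hasDerivAt_right (hint t ht)
      (ContinuousAt.stronglyMeasurableAtFilter isOpen_Ioi
        (fun s hs => (hderiv s hs).continuousAt) t ht)
      (hderiv t ht).continuousAt
  have hΦd t (ht : 0 < t) :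
      HasDerivAt (fun s => s * g s - ∫ τ in (0:ℝ)..s, g τ) (t * g' t) t :=
    (((hasDerivAt_id' t).mul (hderiv t ht)).sub (hGd t ht)).congr_deriv (by ring)
  have hG0 := tendsto_integral_nhdsGT one_pos (hint 1 one_pos)
  have hΦ0 : Tendsto (fun s => s * g s - ∫ τ in (0:ℝ)..s, g τ) (𝓝[>] 0) (𝓝 0) := by
    simpa using (tendsto_mul_nhdsGT_zero_of_monotoneOn hmono fun x hx => (hpos x hx).le).sub hG0
  refine ⟨strictMonoOn_Ioi_of_hasDerivAt_pos hΦd hΦd_pos, fun t ht => ⟨?_, ?_⟩⟩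
  · have hδG := le_of_hasDerivAt_le_of_tendsto_nhdsGT (fun s hs => (hGd s hs).const_mul δ) hΦd
      hlower (by simpa using hG0.const_mul δ) hΦ0 ht
    rw [div_mul_eq_mul_div, div_le_iff₀ (by linarith)]
    linarith
  · have hg₀G := le_of_hasDerivAt_le_of_tendsto_nhdsGT hΦd (fun s hs => (hGd s hs).const_mul g₀)
      hupper hΦ0 (by simpa using hG0.const_mul g₀) ht
    rw [div_mul_eq_mul_div, le_div_iff₀ (by linarith)]
    linarith
end

section
/- Let 1 ≤ g₀, let 0 < δ ≤ g₀, let g : (0,∞) → (0,∞) be differentiable with δ ≤ t g'(t)/g(t) ≤ g₀ for all t > 0, and let C₀ > 0. Then there exists a constant c > 0, depending only on g, g₀ and C₀, such that for all vectors a, b ∈ ℝ^N with ‖a‖ ≤ C₀, ‖b − a‖ ≤ C₀ and b ≠ a: (i) if ‖b − a‖ > 2‖a‖ then G(‖b − a‖) ≥ c·‖b − a‖^{g₀+1}; and (ii) if ‖b − a‖ ≤ 2‖a‖ (so a ≠ 0) then (g(‖a‖)/‖a‖)·‖b − a‖² ≥ c·‖b − a‖^{g₀+1}. -/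
/-!
The lower Lieberman bound makes `g` increasing and the upper one makes `g t * t ^ (-g₀)`
decreasing, so `K * t ^ g₀ ≤ g t` on `(0, C₀]` with `K = g C₀ / C₀ ^ g₀`. If `s = ‖b - a‖`
exceeds `2‖a‖`, then `G s ≥ (s/2) g (s/2) ≥ K (s/2) ^ (g₀ + 1)`. Otherwise `s/2 ≤ ‖a‖` and,
as `g₀ ≥ 1`, `g ‖a‖ / ‖a‖ ≥ K ‖a‖ ^ (g₀ - 1) ≥ K (s/2) ^ (g₀ - 1)`. Hence `c = K / 2 ^ (g₀ + 1)`.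
-/

open MeasureTheory Set

section Elasticity

variable {g g' : ℝ → ℝ}

theorem monotoneOn_Ioi_of_elasticity_nonneg (hpos : ∀ t > 0, 0 < g t)
    (hderiv : ∀ t > 0, HasDerivAt g (g' t) t) (hlow : ∀ t > 0, 0 ≤ t * g' t / g t) :
    MonotoneOn g (Ioi 0) := by
  refine monotoneOn_of_hasDerivWithinAt_nonneg (f' := g') (convex_Ioi 0)
    (fun t ht => (hderiv t ht).continuousAt.continuousWithinAt) (fun t ht => ?_) (fun t ht => ?_)
    <;> rw [interior_Ioi, mem_Ioi] at ht
  · exact (hderiv t ht).hasDerivWithinAt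
  · have hslope : 0 ≤ t * g' t := by
      simpa only [zero_mul] using (le_div_iff₀ (hpos t ht)).1 (hlow t ht)
    exact nonneg_of_mul_nonneg_right hslope ht

theorem antitoneOn_mul_rpow_neg_of_elasticity_le {p : ℝ} (hpos : ∀ t > 0, 0 < g t)
    (hderiv : ∀ t > 0, HasDerivAt g (g' t) t) (hup : ∀ t > 0, t * g' t / g t ≤ p) :
    AntitoneOn (fun t => g t * t ^ (-p)) (Ioi 0) := by
  have hd (t : ℝ) (ht : 0 < t) : HasDerivAt (fun t => g t * t ^ (-p))
      (g' t * t ^ (-p) + g t * (-p * t ^ (-p - 1))) t :=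
    (hderiv t ht).mul (Real.hasDerivAt_rpow_const (Or.inl ht.ne'))
  refine antitoneOn_of_hasDerivWithinAt_nonpos
    (f' := fun t => g' t * t ^ (-p) + g t * (-p * t ^ (-p - 1))) (convex_Ioi 0)
    (fun t ht => (hd t ht).continuousAt.continuousWithinAt) (fun t ht => ?_) (fun t ht => ?_)
    <;> rw [interior_Ioi, mem_Ioi] at ht
  · exact (hd t ht).hasDerivWithinAt
  · have hslope : t * g' t ≤ p * g t := (div_le_iff₀ (hpos t ht)).1 (hup t ht)
    calc g' t * t ^ (-p) + g t * (-p * t ^ (-p - 1))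
        = t ^ (-p - 1) * (t * g' t - p * g t) := by
          rw [Real.rpow_sub_one ht.ne']; field_simp; ring
      _ ≤ 0 := mul_nonpos_of_nonneg_of_nonpos (by positivity) (by linarith)

end Elasticity

theorem mul_rpow_le_mul_rpow_of_antitoneOn {g : ℝ → ℝ} {p s t : ℝ}
    (hanti : AntitoneOn (fun t => g t * t ^ (-p)) (Ioi 0)) (hs : 0 < s) (hst : s ≤ t) :
    g t * s ^ p ≤ g s * t ^ p := by
  have ht := hs.trans_le hst
  have h := hanti hs ht hst
  simp only [Real.rpow_neg hs.le, Real.rpow_neg ht.le, ← div_eq_mul_inv] at h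
  rwa [div_le_div_iff₀ (by positivity) (by positivity)] at h

section Monotone

variable {g : ℝ → ℝ} {s : ℝ}

theorem intervalIntegrable_zero_of_monotoneOn_Ioi (hmono : MonotoneOn g (Ioi 0))
    (hnonneg : ∀ t > 0, 0 ≤ g t) (hs : 0 ≤ s) : IntervalIntegrable g volume 0 s := by
  rw [intervalIntegrable_iff_integrableOn_Ioc_of_le hs]
  refine ⟨(aemeasurable_restrict_of_monotoneOn measurableSet_Ioc
      (hmono.mono Ioc_subset_Ioi_self)).aestronglyMeasurable,
    .restrict_of_bounded (C := g s) measure_Ioc_lt_top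
      (ae_restrict_of_forall_mem measurableSet_Ioc fun t ht => ?_)⟩
  rw [Real.norm_of_nonneg (hnonneg t ht.1)]
  exact hmono ht.1 (ht.1.trans_le ht.2) ht.2

theorem half_mul_apply_half_le_integral_of_monotoneOn_Ioi (hmono : MonotoneOn g (Ioi 0))
    (hnonneg : ∀ t > 0, 0 ≤ g t) (hs : 0 < s) :
    s / 2 * g (s / 2) ≤ ∫ τ in (0:ℝ)..s, g τ := by
  have hs2 : 0 < s / 2 := by linarith
  have hsecond_int : IntervalIntegrable g volume (s / 2) s := by
    refine (hmono.mono fun t ht => hs2.trans_le ?_).intervalIntegrable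
    rw [uIcc_of_le (by linarith)] at ht
    exact ht.1
  rw [← intervalIntegral.integral_add_adjacent_intervals
    (intervalIntegrable_zero_of_monotoneOn_Ioi hmono hnonneg hs2.le) hsecond_int]
  have hfirst : 0 ≤ ∫ τ in (0:ℝ)..(s / 2), g τ := by
    rw [intervalIntegral.integral_of_le hs2.le]
    exact setIntegral_nonneg measurableSet_Ioc fun t ht => hnonneg t ht.1
  have hsecond : s / 2 * g (s / 2) ≤ ∫ τ in (s / 2)..s, g τ :=
    calc s / 2 * g (s / 2) = ∫ _ in (s / 2)..s, g (s / 2) := by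
          rw [intervalIntegral.integral_const, smul_eq_mul]; ring
      _ ≤ ∫ τ in (s / 2)..s, g τ :=
        intervalIntegral.integral_mono_on (by linarith) intervalIntegrable_const hsecond_int
          fun t ht => hmono hs2 (hs2.trans_le ht.1) ht.1
  linarith

end Monotone

section PowerLowerBound

variable {g : ℝ → ℝ} {p K C s : ℝ}

theorem div_two_rpow_mul_rpow_le_half_mul_apply_half
    (hK : ∀ t, 0 < t → t ≤ C → K * t ^ p ≤ g t) (hs : 0 < s) (hsC : s / 2 ≤ C) :
    K / 2 ^ (p + 1) * s ^ (p + 1) ≤ s / 2 * g (s / 2) :=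
  calc K / 2 ^ (p + 1) * s ^ (p + 1) = s / 2 * (K * (s / 2) ^ p) := by
        rw [Real.div_rpow hs.le zero_le_two, Real.rpow_add_one hs.ne',
          Real.rpow_add_one two_ne_zero]
        field_simp
    _ ≤ s / 2 * g (s / 2) := by gcongr; exact hK _ (by positivity) hsC

theorem div_two_rpow_mul_rpow_le_div_mul_sq {t : ℝ} (hp : 1 ≤ p) (hK₀ : 0 ≤ K)
    (hK : ∀ t, 0 < t → t ≤ C → K * t ^ p ≤ g t) (hs : 0 < s) (hst : s ≤ 2 * t) (htC : t ≤ C) :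
    K / 2 ^ (p + 1) * s ^ (p + 1) ≤ g t / t * s ^ 2 := by
  have ht : 0 < t := by linarith
  calc K / 2 ^ (p + 1) * s ^ (p + 1) ≤ K / 2 ^ (p - 1) * s ^ (p + 1) := by
        gcongr
        · exact one_le_two
        · linarith
    _ = K * (s / 2) ^ (p - 1) * s ^ 2 := by
        rw [Real.div_rpow hs.le zero_le_two, Real.rpow_add_one hs.ne', Real.rpow_sub_one hs.ne']
        field_simp
    _ ≤ K * t ^ (p - 1) * s ^ 2 := by gcongr; linarith
    _ = K * t ^ p / t * s ^ 2 := by rw [Real.rpow_sub_one ht.ne']; ring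
    _ ≤ g t / t * s ^ 2 := by gcongr; exact hK t ht htC

end PowerLowerBound

theorem gradient_convergence_pointwise_bound_general
    (N : ℕ) (δ g₀ : ℝ) (hg₀ : 1 ≤ g₀) (hδ : 0 < δ)
    (g g' : ℝ → ℝ)
    (hpos : ∀ t > 0, 0 < g t)
    (hderiv : ∀ t > 0, HasDerivAt g (g' t) t)
    (hlieb : ∀ t > 0, δ ≤ t * g' t / g t ∧ t * g' t / g t ≤ g₀)
    (G : ℝ → ℝ) (hG : ∀ t, G t = ∫ τ in (0:ℝ)..t, g τ)
    (C₀ : ℝ) (hC₀ : 0 < C₀) :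
    ∃ c > (0:ℝ), ∀ a b : EuclideanSpace ℝ (Fin N),
      ‖a‖ ≤ C₀ → ‖b - a‖ ≤ C₀ → b ≠ a →
      (2 * ‖a‖ < ‖b - a‖ → c * ‖b - a‖ ^ (g₀ + 1) ≤ G ‖b - a‖) ∧
      (‖b - a‖ ≤ 2 * ‖a‖ → c * ‖b - a‖ ^ (g₀ + 1) ≤ g ‖a‖ / ‖a‖ * ‖b - a‖ ^ 2) := by
  have hmono := monotoneOn_Ioi_of_elasticity_nonneg hpos hderiv
    fun t ht => hδ.le.trans (hlieb t ht).1
  have hanti := antitoneOn_mul_rpow_neg_of_elasticity_le hpos hderiv fun t ht => (hlieb t ht).2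
  have hK₀ : 0 < g C₀ / C₀ ^ g₀ := div_pos (hpos C₀ hC₀) (by positivity)
  have hK (t : ℝ) (ht : 0 < t) (htC : t ≤ C₀) : g C₀ / C₀ ^ g₀ * t ^ g₀ ≤ g t := by
    rw [div_mul_eq_mul_div, div_le_iff₀ (by positivity)]
    exact mul_rpow_le_mul_rpow_of_antitoneOn hanti ht htC
  refine ⟨g C₀ / C₀ ^ g₀ / 2 ^ (g₀ + 1), by positivity, fun a b ha hba hne => ?_⟩
  have hs : 0 < ‖b - a‖ := norm_pos_iff.2 (sub_ne_zero.2 hne)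
  refine ⟨fun _ => ?_, fun hnear => div_two_rpow_mul_rpow_le_div_mul_sq hg₀ hK₀.le hK hs hnear ha⟩
  calc _ ≤ ‖b - a‖ / 2 * g (‖b - a‖ / 2) :=
        div_two_rpow_mul_rpow_le_half_mul_apply_half hK hs (by linarith)
    _ ≤ G ‖b - a‖ := hG _ ▸ half_mul_apply_half_le_integral_of_monotoneOn_Ioi hmono
        (fun t ht => (hpos t ht).le) hs

/-- Under the Lieberman condition with `g₀ ≥ 1`, for every `C₀ > 0` there
is `c > 0` (depending only on `g, g₀, C₀`) such that for all `a, b ∈ ℝ^N` with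
`‖a‖ ≤ C₀`, `‖b − a‖ ≤ C₀`, `b ≠ a`: if `‖b − a‖ > 2‖a‖` then
`G(‖b − a‖) ≥ c ‖b − a‖^{g₀+1}`, and if `‖b − a‖ ≤ 2‖a‖` then
`(g(‖a‖)/‖a‖) ‖b − a‖² ≥ c ‖b − a‖^{g₀+1}`. -/
theorem gradient_convergence_pointwise_bound
    (N : ℕ) (δ g₀ : ℝ) (hg₀ : 1 ≤ g₀) (hδ : 0 < δ) (hδg₀ : δ ≤ g₀)
    (g g' : ℝ → ℝ)
    (hpos : ∀ t > 0, 0 < g t)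
    (hderiv : ∀ t > 0, HasDerivAt g (g' t) t)
    (hlieb : ∀ t > 0, δ ≤ t * g' t / g t ∧ t * g' t / g t ≤ g₀)
    (G : ℝ → ℝ) (hG : ∀ t, G t = ∫ τ in (0:ℝ)..t, g τ)
    (C₀ : ℝ) (hC₀ : 0 < C₀) :
    ∃ c > (0:ℝ), ∀ a b : EuclideanSpace ℝ (Fin N),
      ‖a‖ ≤ C₀ → ‖b - a‖ ≤ C₀ → b ≠ a →
      (2 * ‖a‖ < ‖b - a‖ → c * ‖b - a‖ ^ (g₀ + 1) ≤ G ‖b - a‖) ∧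
      (‖b - a‖ ≤ 2 * ‖a‖ → c * ‖b - a‖ ^ (g₀ + 1) ≤ g ‖a‖ / ‖a‖ * ‖b - a‖ ^ 2) :=
  gradient_convergence_pointwise_bound_general N δ g₀ hg₀ hδ g g' hpos hderiv hlieb G hG C₀ hC₀
end
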